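/- arXiv:2308.13684 — 12 statements merged into one kernel-verified Lean document; each statement's English description precedes it below -/
import Mathlib

section
/- Let X be a zero-dimensional topological space and F = (W, ≤) a rooted S4-frame (finite set W with a reflexive transitive relation ≤ with a root r such that every element is above r) containing a maximal point m (i.e., the upper set of m is {m}). If F (with the Alexandroff topology of up-sets) is a continuous open surjective image of some open subspace of X, then F is a continuous open surjective image of X itself. -/
/-!
Pick `y ∈ Y` mapped to the root and a clopen `C` with `y ∈ C ⊆ Y`. The restriction of `f` to
`C` is still interior, and it is onto because its image is an up-set containing the root. Extend
it to all of `X` by sending `X \ C` to the maximal point `m`: since `C` is clopen the extension is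
continuous, and since `{m}` is an up-set, hence open, the extension is an open map.
-/

open Topology

/-- The Alexandroff topology on a quasi-ordered set whose open sets are the up-sets. -/
def upsetTopology {W : Type*} (le : W → W → Prop) : TopologicalSpace W where
  IsOpen U := ∀ ⦃a⦄, a ∈ U → ∀ ⦃b⦄, le a b → b ∈ U
  isOpen_univ := fun _ _ _ _ => trivial
  isOpen_inter := fun _ _ hU hV _ ha _ hab => ⟨hU ha.1 hab, hV ha.2 hab⟩
  isOpen_sUnion := fun S hS a ha b hab => by
    obtain ⟨U, hU, haU⟩ := ha
    exact ⟨U, hU, hS U hU haU hab⟩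

open Filter Function Set Set.Notation

section upsetTopology

variable {W : Type*} {le : W → W → Prop}

theorem upsetTopology_isOpen_singleton {m : W} (hmax : ∀ w, le m w → w = m) :
    IsOpen[upsetTopology le] {m} := by
  rintro a rfl b hab
  exact hmax b hab

theorem upsetTopology_eq_univ_of_root_mem {r : W} (hroot : ∀ w, le r w) {U : Set W}
    (hU : IsOpen[upsetTopology le] U) (hr : r ∈ U) : U = univ :=
  eq_univ_of_forall fun w => hU hr (hroot w)

end upsetTopology

section extendConst

variable {X W : Type*} {C : Set X} {f : C → W} {m : W}

open Classical in
noncomputable def extendConst (C : Set X) (f : C → W) (m : W) : X → W :=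
  fun x => if hx : x ∈ C then f ⟨x, hx⟩ else m

theorem extendConst_of_mem {x : X} (hx : x ∈ C) : extendConst C f m x = f ⟨x, hx⟩ :=
  dif_pos hx

theorem extendConst_of_notMem {x : X} (hx : x ∉ C) : extendConst C f m x = m :=
  dif_neg hx

theorem extendConst_comp_val : extendConst C f m ∘ Subtype.val = f :=
  funext fun x => extendConst_of_mem x.2

theorem surjective_extendConst (hf : Surjective f) : Surjective (extendConst C f m) := fun w =>
  let ⟨x, hx⟩ := hf w
  ⟨x, (extendConst_of_mem x.2).trans hx⟩

variable [TopologicalSpace X] [TopologicalSpace W]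

theorem continuous_extendConst (hC : IsClopen C) (hf : Continuous f) :
    Continuous (extendConst C f m) := by
  refine continuous_iff_continuousAt.2 fun x => ?_
  by_cases hx : x ∈ C
  · have hon : ContinuousOn (extendConst C f m) C := by
      rw [continuousOn_iff_continuous_domRestrict, domRestrict_eq, extendConst_comp_val]
      exact hf
    exact hon.continuousAt (hC.isOpen.mem_nhds hx)
  · have hconst : extendConst C f m =ᶠ[𝓝 x] fun _ => m :=
      eventually_of_mem (hC.isClosed.isOpen_compl.mem_nhds hx) fun _ => extendConst_of_notMem
    exact continuousAt_const.congr hconst.symm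

theorem isOpenMap_extendConst (hC : IsOpen C) (hf : IsOpenMap f) (hm : IsOpen {m}) :
    IsOpenMap (extendConst C f m) := by
  refine isOpenMap_iff_nhds_le.2 fun x => ?_
  by_cases hx : x ∈ C
  · calc 𝓝 (extendConst C f m x) = 𝓝 (f ⟨x, hx⟩) := by rw [extendConst_of_mem hx]
      _ ≤ map f (𝓝 ⟨x, hx⟩) := isOpenMap_iff_nhds_le.1 hf _
      _ = map (extendConst C f m) (𝓝 x) := by
        rw [← hC.nhdsWithin_eq hx, ← map_nhds_subtype_val ⟨x, hx⟩, map_map,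
          extendConst_comp_val]
  · calc 𝓝 (extendConst C f m x) = pure (extendConst C f m x) := by
          rwa [extendConst_of_notMem hx, ← isOpen_singleton_iff_nhds_eq_pure]
      _ ≤ map (extendConst C f m) (𝓝 x) := Filter.map_pure _ _ ▸ map_mono (pure_le_nhds x)

end extendConst

theorem stmt_0_general {X W : Type*} [TopologicalSpace X]
    (hzd : ∀ (x : X) (U : Set X), IsOpen U → x ∈ U → ∃ C : Set X, IsClopen C ∧ x ∈ C ∧ C ⊆ U)
    (le : W → W → Prop)
    (r : W) (hroot : ∀ w, le r w)
    (m : W) (hmax : ∀ w, le m w → w = m)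
    (h : ∃ Y : Set X, IsOpen Y ∧ ∃ f : Y → W, Function.Surjective f ∧
      Continuous[inferInstance, upsetTopology le] f ∧
      @IsOpenMap Y W inferInstance (upsetTopology le) f) :
    ∃ g : X → W, Function.Surjective g ∧
      Continuous[inferInstance, upsetTopology le] g ∧
      @IsOpenMap X W inferInstance (upsetTopology le) g := by
  let _ := upsetTopology le
  obtain ⟨Y, hY, f, hf_surj, hf_cont, hf_open⟩ := h
  obtain ⟨y, hy⟩ := hf_surj r
  obtain ⟨C, hC, hyC, hCY⟩ := hzd y Y hY y.2
  have hC_open_in_Y : IsOpen (Y ↓∩ C) := hC.isOpen.preimage continuous_subtype_val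
  let f' : C → W := f ∘ inclusion hCY
  have hf'_open : IsOpenMap f' :=
    hf_open.comp (IsOpenEmbedding.inclusion hCY hC_open_in_Y).isOpenMap
  have hf'_surj : Surjective f' := range_eq_univ.1 <|
    upsetTopology_eq_univ_of_root_mem hroot hf'_open.isOpen_range ⟨⟨y, hyC⟩, hy⟩
  exact ⟨extendConst C f' m, surjective_extendConst hf'_surj,
    continuous_extendConst hC (hf_cont.comp (continuous_inclusion hCY)),
    isOpenMap_extendConst hC.isOpen hf'_open (upsetTopology_isOpen_singleton hmax)⟩

/-- If a finite rooted S4-frame with a maximal point is an interior (continuous open)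
surjective image of an open subspace of a zero-dimensional space `X`, then it is an
interior surjective image of `X` itself. -/
theorem stmt_0 {X W : Type*} [TopologicalSpace X] [Fintype W]
    (hzd : ∀ (x : X) (U : Set X), IsOpen U → x ∈ U → ∃ C : Set X, IsClopen C ∧ x ∈ C ∧ C ⊆ U)
    (le : W → W → Prop)
    (hrefl : ∀ w, le w w)
    (htrans : ∀ a b c, le a b → le b c → le a c)
    (r : W) (hroot : ∀ w, le r w)
    (m : W) (hmax : ∀ w, le m w → w = m)
    (h : ∃ Y : Set X, IsOpen Y ∧ ∃ f : Y → W, Function.Surjective f ∧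
      Continuous[inferInstance, upsetTopology le] f ∧
      @IsOpenMap Y W inferInstance (upsetTopology le) f) :
    ∃ g : X → W, Function.Surjective g ∧
      Continuous[inferInstance, upsetTopology le] g ∧
      @IsOpenMap X W inferInstance (upsetTopology le) g :=
  stmt_0_general hzd le r hroot m hmax h
end

section
/- Let X be a regular topological space, A a closed P-set in X, and U an open subset of X with U ∩ A = ∅ and cl(U) = U ∪ A. Then cl(U) is a P-set in X. -/
/-- `A` is a P-set in `X`: the intersection of any countable family of neighborhoods of `A`
(sets containing `A` in their interior) is again a neighborhood of `A`. -/
def IsPSet {X : Type*} [TopologicalSpace X] (A : Set X) : Prop :=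
  ∀ N : ℕ → Set X, (∀ n, A ⊆ interior (N n)) → A ⊆ interior (⋂ n, N n)

/-- An Fσ-set is a countable union of closed sets. -/
def IsFsigma {X : Type*} [TopologicalSpace X] (F : Set X) : Prop :=
  ∃ f : ℕ → Set X, (∀ n, IsClosed (f n)) ∧ F = ⋃ n, f n

/-- An almost P-space: every nonempty Gδ-subset has nonempty interior. -/
def IsAlmostPSpace (X : Type*) [TopologicalSpace X] : Prop :=
  ∀ G : Set X, IsGδ G → G.Nonempty → (interior G).Nonempty

/-- If `X` is regular, `A` is a closed P-set, `U` is open with `U ∩ A = ∅` and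
`closure U = U ∪ A`, then `closure U` is a P-set in `X`. -/
theorem stmt_6 {X : Type*} [TopologicalSpace X] [RegularSpace X] {A U : Set X}
    (hAc : IsClosed A) (hAP : IsPSet A) (hU : IsOpen U)
    (hUA : U ∩ A = ∅) (hclU : closure U = U ∪ A) :
    IsPSet (closure U) := by
  intro N hN
  have hA : A ⊆ interior (⋂ n, N n) :=
    hAP N fun n => (Set.subset_union_right.trans hclU.ge).trans (hN n)
  have hUsub : U ⊆ interior (⋂ n, N n) := by
    apply interior_maximal _ hU |>.trans (interior_mono le_rfl)
    exact Set.subset_iInter fun n => (subset_closure.trans (hN n)).trans interior_subset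
  rw [hclU]
  exact Set.union_subset hUsub hA
end

section
/- Let X be a topological space, A ⊆ X a closed P-set, and U an open subset of X \ A. Set B = cl(U) \ U. If B ⊆ A, then B is a nowhere dense closed P-set in the subspace cl(U). -/
/-- If `A` is a closed P-set in `X`, `U` is an open subset of `X \ A`, and
`B = closure U \ U` is contained in `A`, then `B` is a nowhere dense closed P-set
in the subspace `closure U`. -/
theorem stmt_7 {X : Type*} [TopologicalSpace X] {A U : Set X}
    (hAc : IsClosed A) (hAP : IsPSet A) (hU : IsOpen U) (hUA : U ⊆ Aᶜ)
    (hB : closure U \ U ⊆ A) :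
    IsClosed (Subtype.val ⁻¹' (closure U \ U) : Set (closure U)) ∧
    IsNowhereDense (Subtype.val ⁻¹' (closure U \ U) : Set (closure U)) ∧
    IsPSet (Subtype.val ⁻¹' (closure U \ U) : Set (closure U)) := by
  have hCc : IsClosed (closure U) := isClosed_closure
  have hBc : IsClosed (closure U \ U) := hCc.sdiff hU
  have hclosed : IsClosed (Subtype.val ⁻¹' (closure U \ U) : Set (closure U)) :=
    hBc.preimage continuous_subtype_val
  refine ⟨hclosed, ?_, ?_⟩
  · rw [IsNowhereDense, hclosed.closure_eq, Set.eq_empty_iff_forall_notMem]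
    rintro ⟨x, hxC⟩ hx
    obtain ⟨t, hts, hto, hxt⟩ := mem_interior.mp hx
    obtain ⟨V, hVo, hVt⟩ := isOpen_induced_iff.mp hto
    have hxV : x ∈ V := by
      have : (⟨x, hxC⟩ : closure U) ∈ Subtype.val ⁻¹' V := hVt ▸ hxt
      exact this
    obtain ⟨y, hyV, hyU⟩ := mem_closure_iff.mp hxC V hVo hxV
    have hyC : y ∈ closure U := subset_closure hyU
    have : (⟨y, hyC⟩ : closure U) ∈ t := by
      rw [← hVt]; exact hyV
    exact (hts this).2 hyU
  · intro N hN
    -- for each n, choose an open V n in X with val ⁻¹' (V n) = interior (N n)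
    have hchoice : ∀ n, ∃ V : Set X, IsOpen V ∧
        (Subtype.val ⁻¹' V : Set (closure U)) = interior (N n) :=
      fun n => isOpen_induced_iff.mp isOpen_interior
    choose V hVo hVeq using hchoice
    set M : ℕ → Set X := fun n => V n ∪ (closure U)ᶜ with hM
    have hMo : ∀ n, IsOpen (M n) := fun n => (hVo n).union hCc.isOpen_compl
    have hAM : ∀ n, A ⊆ M n := by
      intro n x hxA
      by_cases hxC : x ∈ closure U
      · have hxB : x ∈ closure U \ U := ⟨hxC, fun hxU => hUA hxU hxA⟩
        have : (⟨x, hxC⟩ : closure U) ∈ interior (N n) := hN n ⟨hxB.1, hxB.2⟩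
        rw [← hVeq n] at this
        exact Or.inl this
      · exact Or.inr hxC
    have hAint : A ⊆ interior (⋂ n, M n) :=
      hAP M (fun n => ((hMo n).interior_eq).symm ▸ hAM n)
    -- W := interior (⋂ n, M n)
    intro b hb'
    apply mem_interior.mpr
    refine ⟨Subtype.val ⁻¹' interior (⋂ n, M n), ?_, isOpen_interior.preimage continuous_subtype_val, ?_⟩
    · rintro ⟨y, hyC⟩ hy
      have hy' : y ∈ ⋂ n, M n := interior_subset hy
      apply Set.mem_iInter.mpr
      intro n
      have : y ∈ M n := Set.mem_iInter.mp hy' n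
      rcases this with h | h
      · have : (⟨y, hyC⟩ : closure U) ∈ interior (N n) := by rw [← hVeq n]; exact h
        exact interior_subset this
      · exact absurd hyC h
    · have : (b : X) ∈ A := hB hb'
      exact hAint this
end

section
/- Let X be a topological space covered by finitely many closed subspaces Y₁, …, Yₙ (n ≥ 1). If each Yᵢ is an almost P-space (in the subspace topology), then X is an almost P-space. -/
theorem isGδ_preimage {X Z : Type*} [TopologicalSpace X] [TopologicalSpace Z]
    {f : Z → X} (hf : Continuous f) {s : Set X} (hs : IsGδ s) : IsGδ (f ⁻¹' s) := by
  obtain ⟨g, hg, rfl⟩ := isGδ_iff_eq_iInter_nat.mp hs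
  rw [Set.preimage_iInter]
  exact IsGδ.iInter_of_isOpen fun n => (hg n).preimage hf

/-- If `X` is covered by finitely many (at least one) closed subspaces each of which is
an almost P-space, then `X` is an almost P-space. -/
theorem stmt_8 {X : Type*} [TopologicalSpace X] (n : ℕ) (hn : 1 ≤ n)
    (Y : Fin n → Set X) (hc : ∀ i, IsClosed (Y i)) (hcov : ⋃ i, Y i = Set.univ)
    (h : ∀ i, IsAlmostPSpace (Y i)) :
    IsAlmostPSpace X := by
  intro G hG hGne
  suffices H : ∀ k (T : Finset (Fin n)) (V : Set X), (Finset.univ \ T).card ≤ k →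
      IsOpen V → (∀ j ∈ T, V ∩ Y j ⊆ G) → (G ∩ V).Nonempty → (interior G).Nonempty by
    exact H n ∅ Set.univ (by simpa using Finset.card_le_univ _) isOpen_univ (by simp)
      (by simpa)
  intro k
  induction k with
  | zero =>
    intro T V hcard hV hTV hne
    have hT : T = Finset.univ := by
      have h0 : (Finset.univ \ T).card = 0 := Nat.le_zero.mp hcard
      have := Finset.card_eq_zero.mp h0
      have hsub : (Finset.univ : Finset (Fin n)) ⊆ T := by
        intro x hx
        by_contra hxT
        exact absurd (Finset.mem_sdiff.mpr ⟨hx, hxT⟩) (by simp [this])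
      exact Finset.eq_univ_of_forall fun x => hsub (Finset.mem_univ x)
    -- V ⊆ G
    have hVG : V ⊆ G := by
      intro x hx
      have : x ∈ ⋃ i, Y i := by rw [hcov]; trivial
      obtain ⟨i, hi⟩ := Set.mem_iUnion.mp this
      exact hTV i (by simp [hT]) ⟨hx, hi⟩
    obtain ⟨x, hxG, hxV⟩ := hne
    exact ⟨x, (hV.subset_interior_iff.mpr hVG).trans (interior_mono (Set.Subset.refl G)) hxV⟩
  | succ k ih =>
    intro T V hcard hV hTV hne
    by_cases hcase : ∃ i ∉ T, (G ∩ V ∩ Y i).Nonempty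
    · obtain ⟨i, hiT, ⟨x, hxGV, hxY⟩⟩ := hcase
      -- G ∩ V is Gδ in Y i and nonempty
      have hGV : IsGδ ((fun y : Y i => (y : X)) ⁻¹' (G ∩ V)) :=
        isGδ_preimage continuous_subtype_val (hG.inter hV.isGδ)
      have hneY : ((fun y : Y i => (y : X)) ⁻¹' (G ∩ V)).Nonempty :=
        ⟨⟨x, hxY⟩, hxGV⟩
      obtain ⟨y, hy⟩ := h i _ hGV hneY
      rw [mem_interior] at hy
      obtain ⟨t, hts, htO, hyt⟩ := hy
      obtain ⟨W, hWopen, hWt⟩ := isOpen_induced_iff.mp htO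
      -- (y : X) ∈ W, and W ∩ Y i ⊆ G ∩ V
      have hyW : (y : X) ∈ W := by
        have : y ∈ t := hyt
        rw [← hWt] at this; exact this
      have hWYi : W ∩ Y i ⊆ G ∩ V := by
        rintro z ⟨hzW, hzY⟩
        have : (⟨z, hzY⟩ : Y i) ∈ t := by rw [← hWt]; exact hzW
        exact hts this
      refine ih (insert i T) (V ∩ W) ?_ (hV.inter hWopen) ?_ ?_
      · have h1 : Finset.univ \ insert i T = (Finset.univ \ T).erase i := by
          ext x
          simp only [Finset.mem_sdiff, Finset.mem_erase, Finset.mem_insert, Finset.mem_univ,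
            true_and]
          tauto
        rw [h1]
        have h2 : i ∈ Finset.univ \ T := Finset.mem_sdiff.mpr ⟨Finset.mem_univ i, hiT⟩
        have := Finset.card_erase_of_mem h2
        omega
      · intro j hj
        rcases Finset.mem_insert.mp hj with rfl | hjT
        · intro z hz
          exact (hWYi ⟨hz.1.2, hz.2⟩).1
        · intro z hz
          exact hTV j hjT ⟨hz.1.1, hz.2⟩
      · have hyYi : (y : X) ∈ Y i := y.2
        have hyGV : (y : X) ∈ G ∩ V := hWYi ⟨hyW, hyYi⟩
        exact ⟨y, hyGV.1, hyGV.2, hyW⟩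
    · -- V' = V \ ⋃ j ∉ T, Y j is open, nonempty, ⊆ G
      set B : Set X := ⋃ j ∈ (Finset.univ \ T), Y j with hB
      have hBclosed : IsClosed B := by
        apply Set.Finite.isClosed_biUnion (Finset.finite_toSet _)
        intro j _; exact hc j
      have hV'open : IsOpen (V \ B) := hV.sdiff hBclosed
      have hsub : V \ B ⊆ G := by
        rintro z ⟨hzV, hzB⟩
        have : z ∈ ⋃ i, Y i := by rw [hcov]; trivial
        obtain ⟨j, hj⟩ := Set.mem_iUnion.mp this
        by_cases hjT : j ∈ T
        · exact hTV j hjT ⟨hzV, hj⟩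
        · exact absurd (Set.mem_biUnion (Finset.mem_sdiff.mpr ⟨Finset.mem_univ j, hjT⟩) hj) hzB
      have hne' : (V \ B).Nonempty := by
        obtain ⟨x, hxG, hxV⟩ := hne
        refine ⟨x, hxV, ?_⟩
        intro hxB
        obtain ⟨j, hjmem, hjx⟩ := Set.mem_iUnion₂.mp hxB
        have hjT : j ∉ T := (Finset.mem_sdiff.mp hjmem).2
        exact hcase ⟨j, hjT, ⟨x, ⟨hxG, hxV⟩, hjx⟩⟩
      obtain ⟨x, hx⟩ := hne'
      exact ⟨x, hV'open.subset_interior_iff.mpr hsub hx⟩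
end

section
/- Let X be a normal topological space, A a closed P-set in X, and B a closed P-set in the subspace A. Then B is a closed P-set in X. -/
/-- If `X` is normal, `A` is a closed P-set in `X`, and `B ⊆ A` is a closed P-set in
the subspace `A`, then `B` is a closed P-set in `X`. -/
theorem stmt_9 {X : Type*} [TopologicalSpace X] [NormalSpace X] {A B : Set X}
    (hAc : IsClosed A) (hAP : IsPSet A) (hBA : B ⊆ A)
    (hBc : IsClosed (Subtype.val ⁻¹' B : Set A))
    (hBP : IsPSet (Subtype.val ⁻¹' B : Set A)) :
    IsClosed B ∧ IsPSet B := by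
  -- B is closed in X
  have hBcX : IsClosed B := by
    have h := hAc.isClosedEmbedding_subtypeVal.isClosedMap _ hBc
    have : Subtype.val '' (Subtype.val ⁻¹' B : Set A) = B := by
      rw [Subtype.image_preimage_coe]
      exact Set.inter_eq_right.mpr hBA
    rwa [this] at h
  refine ⟨hBcX, ?_⟩
  intro N hN
  set U : ℕ → Set X := fun n => interior (N n) with hU
  have hUopen : ∀ n, IsOpen (U n) := fun n => isOpen_interior
  -- preimages of U n are neighborhoods of B in the subspace A
  have h1 : ∀ n, (Subtype.val ⁻¹' B : Set A) ⊆ interior (Subtype.val ⁻¹' (U n)) := by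
    intro n
    rw [((hUopen n).preimage continuous_subtype_val).interior_eq]
    exact fun x hx => hN n hx
  have h2 := hBP _ h1
  -- interior in the subspace is the preimage of some open set G in X
  obtain ⟨G, hGopen, hGeq⟩ :=
    isOpen_induced_iff.mp (isOpen_interior (s := ⋂ n, (Subtype.val ⁻¹' (U n) : Set A)))
  have hBG : B ⊆ G := by
    intro x hx
    have : (⟨x, hBA hx⟩ : A) ∈ Subtype.val ⁻¹' G := by
      rw [hGeq]; exact h2 hx
    exact this
  have hGA : ∀ n, G ∩ A ⊆ U n := by
    intro n x ⟨hxG, hxA⟩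
    have : (⟨x, hxA⟩ : A) ∈ interior (⋂ n, (Subtype.val ⁻¹' (U n) : Set A)) := by
      rw [← hGeq]; exact hxG
    have := interior_subset this
    simp only [Set.mem_iInter, Set.mem_preimage] at this
    exact this n
  -- normality: separate B from Gᶜ
  obtain ⟨H, W, hHopen, hWopen, hBH, hGcW, hHW⟩ :=
    NormalSpace.normal B Gᶜ hBcX (isOpen_compl_iff.mp (by simpa using hGopen))
      (by
        rw [Set.disjoint_compl_right_iff_subset]
        exact hBG)
  have hclHG : closure H ⊆ G := by
    have hHWc : H ⊆ Wᶜ := Set.disjoint_left.mp hHW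
    have : closure H ⊆ Wᶜ := closure_minimal hHWc (isClosed_compl_iff.mpr hWopen)
    intro x hx
    by_contra hxG
    exact this hx (hGcW hxG)
  -- the key family of neighborhoods of A
  set V : ℕ → Set X := fun n => U n ∪ (closure H)ᶜ with hV
  have hVopen : ∀ n, IsOpen (V n) := fun n =>
    (hUopen n).union (isOpen_compl_iff.mpr isClosed_closure)
  have hAV : ∀ n, A ⊆ interior (V n) := by
    intro n
    rw [(hVopen n).interior_eq]
    intro x hxA
    by_cases hx : x ∈ closure H
    · exact Or.inl (hGA n ⟨hclHG hx, hxA⟩)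
    · exact Or.inr hx
  have h3 := hAP V hAV
  -- conclude
  have hO : IsOpen (interior (⋂ n, V n) ∩ H) := isOpen_interior.inter hHopen
  have hBO : B ⊆ interior (⋂ n, V n) ∩ H := fun x hx => ⟨h3 (hBA hx), hBH hx⟩
  have hON : interior (⋂ n, V n) ∩ H ⊆ ⋂ n, N n := by
    intro x ⟨hx1, hx2⟩
    have hxV : ∀ n, x ∈ V n := by
      have := interior_subset hx1
      exact fun n => Set.mem_iInter.mp this n
    rw [Set.mem_iInter]
    intro n
    rcases hxV n with h | h
    · exact interior_subset h
    · exact absurd (subset_closure hx2) h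
  exact fun x hx => interior_maximal hON hO (hBO hx)
end

section
/- Every infinite ordinal γ (with the order topology) has Čech–Stone compactification β(γ) homeomorphic to the topological disjoint union of a compact ordinal space and the Čech–Stone compactification of a power ω^α of ω; concretely, if γ is compact then β(γ) ≅ γ ⊕ β(ω⁰), and if γ is not compact with Cantor normal form γ = ω^{α_k}·n_k + ⋯ + ω^{α_1}·n_1 then β(γ) ≅ (γ' + 1) ⊕ β(ω^{α_1}) where γ = (γ' + 1) + ω^{α_1}. -/
/-!
The Čech–Stone compactification commutes with binary topological sums and is the identity on
compact Hausdorff spaces. For a non-limit ordinal `a`, the set `[a, a + b)` is open, so the space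
`a + b` is the topological sum of `a` and a translate of `b`. Taking `a = γ' + 1` gives
`β(γ) ≅ β(γ' + 1) ⊕ β(ω^α₁) ≅ (γ' + 1) ⊕ β(ω^α₁)`. In the compact case, taking `a = 1` and
using `1 + γ = γ` for infinite `γ` gives `β(γ) ≅ γ ≅ 1 ⊕ γ`.
-/

open Ordinal Order Set Topology

section StoneCech

variable {X Y : Type*} [TopologicalSpace X] [TopologicalSpace Y]

theorem stoneCech_hom_ext_apply {Z : Type*} [TopologicalSpace Z] [T2Space Z]
    {g₁ g₂ : StoneCech X → Z} (h₁ : Continuous g₁) (h₂ : Continuous g₂)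
    (h : ∀ x, g₁ (stoneCechUnit x) = g₂ (stoneCechUnit x)) (z : StoneCech X) : g₁ z = g₂ z :=
  congrFun (stoneCech_hom_ext h₁ h₂ (funext h)) z

noncomputable def stoneCechMap {f : X → Y} (hf : Continuous f) : StoneCech X → StoneCech Y :=
  stoneCechExtend (continuous_stoneCechUnit.comp hf)

theorem continuous_stoneCechMap {f : X → Y} (hf : Continuous f) :
    Continuous (stoneCechMap hf) :=
  continuous_stoneCechExtend _

@[simp]
theorem stoneCechMap_stoneCechUnit {f : X → Y} (hf : Continuous f) (x : X) :
    stoneCechMap hf (stoneCechUnit x) = stoneCechUnit (f x) :=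
  stoneCechExtend_stoneCechUnit _ x

noncomputable def Homeomorph.stoneCechCongr (e : X ≃ₜ Y) : StoneCech X ≃ₜ StoneCech Y where
  toFun := stoneCechMap e.continuous
  invFun := stoneCechMap e.symm.continuous
  left_inv := stoneCech_hom_ext_apply
    ((continuous_stoneCechMap _).comp (continuous_stoneCechMap _)) continuous_id (by simp)
  right_inv := stoneCech_hom_ext_apply
    ((continuous_stoneCechMap _).comp (continuous_stoneCechMap _)) continuous_id (by simp)
  continuous_toFun := continuous_stoneCechMap _
  continuous_invFun := continuous_stoneCechMap _

noncomputable def Homeomorph.stoneCechOfCompact [CompactSpace X] [T2Space X] :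
    StoneCech X ≃ₜ X where
  toFun := stoneCechExtend continuous_id
  invFun := stoneCechUnit
  left_inv := stoneCech_hom_ext_apply
    (continuous_stoneCechUnit.comp (continuous_stoneCechExtend _)) continuous_id (by simp)
  right_inv := stoneCechExtend_stoneCechUnit continuous_id
  continuous_toFun := continuous_stoneCechExtend _
  continuous_invFun := continuous_stoneCechUnit

noncomputable def Homeomorph.stoneCechSum : StoneCech (X ⊕ Y) ≃ₜ StoneCech X ⊕ StoneCech Y where
  toFun := stoneCechExtend (continuous_stoneCechUnit.sumMap continuous_stoneCechUnit)
  invFun := Sum.elim (stoneCechMap continuous_inl) (stoneCechMap continuous_inr)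
  left_inv := stoneCech_hom_ext_apply
    (((continuous_stoneCechMap _).sumElim (continuous_stoneCechMap _)).comp
      (continuous_stoneCechExtend _)) continuous_id (by rintro (x | y) <;> simp)
  right_inv := by
    rintro (z | z)
    · exact stoneCech_hom_ext_apply ((continuous_stoneCechExtend _).comp
        (continuous_stoneCechMap continuous_inl)) continuous_inl (by simp) z
    · exact stoneCech_hom_ext_apply ((continuous_stoneCechExtend _).comp
        (continuous_stoneCechMap continuous_inr)) continuous_inr (by simp) z
  continuous_toFun := continuous_stoneCechExtend _
  continuous_invFun := (continuous_stoneCechMap _).sumElim (continuous_stoneCechMap _)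

end StoneCech

theorem isOpen_Ici_of_not_isSuccLimit {α : Type*} [LinearOrder α] [TopologicalSpace α]
    [OrderTopology α] [SuccOrder α] [NoMaxOrder α] {a : α} (ha : ¬IsSuccLimit a) :
    IsOpen (Ici a) := by
  rw [← Ioi_insert, insert_eq]
  exact (SuccOrder.isOpen_singleton_iff.2 ha).union isOpen_Ioi

namespace Ordinal

variable {a : Ordinal}

theorem range_add_left (a : Ordinal) : range (a + ·) = Ici a := by
  ext y
  exact ⟨by rintro ⟨x, rfl⟩; exact le_self_add (a := a),
    fun h => ⟨y - a, Ordinal.add_sub_cancel_of_le h⟩⟩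

theorem isOpenEmbedding_add_left (ha : ¬IsSuccLimit a) :
    IsOpenEmbedding (a + · : Ordinal → Ordinal) where
  toIsEmbedding := (isNormal_add_right a).strictMono.isEmbedding_of_ordConnected
    (range_add_left a ▸ ordConnected_Ici)
  isOpen_range := range_add_left a ▸ isOpen_Ici_of_not_isSuccLimit ha

noncomputable def iioAddHomeomorph (ha : ¬IsSuccLimit a) (b : Ordinal) :
    Iio a ⊕ Iio b ≃ₜ Iio (a + b) :=
  have hinl : IsOpenEmbedding (inclusion (Iio_subset_Iio (le_self_add (a := a) (b := b)))) :=
    .inclusion _ (isOpen_Iio.preimage continuous_subtype_val)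
  have hmaps : MapsTo (a + ·) (Iio b) (Iio (a + b)) := fun _ hx => (add_lt_add_iff_left a).2 hx
  have hinr : IsOpenEmbedding hmaps.restrict :=
    (isOpenEmbedding_add_left ha).restrict hmaps isOpen_Iio
  have hinj : Function.Injective (Sum.elim (inclusion _) hmaps.restrict) := by
    rintro (x | x) (y | y) h <;> simp only [Sum.elim_inl, Sum.elim_inr, Sum.inl.injEq,
      Sum.inr.injEq, reduceCtorEq] at h ⊢
    · exact hinl.injective h
    · exact (le_self_add (a := a)).not_gt (congrArg Subtype.val h ▸ x.2)
    · exact (le_self_add (a := a)).not_gt (congrArg Subtype.val h.symm ▸ y.2)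
    · exact hinr.injective h
  have hsurj : Function.Surjective (Sum.elim (inclusion _) hmaps.restrict) := by
    rintro ⟨y, hy⟩
    rcases lt_or_ge y a with h | h
    · exact ⟨.inl ⟨y, h⟩, rfl⟩
    · refine ⟨.inr ⟨y - a, ?_⟩, Subtype.ext (Ordinal.add_sub_cancel_of_le h)⟩
      rwa [mem_Iio, ← add_lt_add_iff_left a, Ordinal.add_sub_cancel_of_le h]
  (hinl.sumElim hinr hinj).isEmbedding.toHomeomorphOfSurjective hsurj

end Ordinal

/-- The Čech–Stone compactification of an infinite ordinal space `γ` is homeomorphic to the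
disjoint union of a compact ordinal and the Čech–Stone compactification of a power of `ω`:
if `γ` is compact then `β(γ) ≅ γ ⊕ β(ω^0)`, and if `γ` is not compact with Cantor normal
form `γ = ω^{α_k}·n_k + ⋯ + ω^{α_1}·n_1` then `β(γ) ≅ (γ' + 1) ⊕ β(ω^{α_1})` where
`γ = (γ' + 1) + ω^{α_1}`. -/
theorem stmt_10 (γ : Ordinal.{0}) (hγ : Ordinal.omega0 ≤ γ) :
    (CompactSpace (Set.Iio γ) →
      Nonempty (StoneCech (Set.Iio γ) ≃ₜ
        ((Set.Iio γ) ⊕ StoneCech (Set.Iio (Ordinal.omega0 ^ (0 : Ordinal)))))) ∧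
    (¬ CompactSpace (Set.Iio γ) →
      ∀ (k : ℕ) (α : Fin (k + 1) → Ordinal) (n : Fin (k + 1) → ℕ),
        StrictMono α → (∀ i, 0 < n i) →
        γ = (List.ofFn fun i : Fin (k + 1) =>
              Ordinal.omega0 ^ α i * (n i : Ordinal)).reverse.sum →
        ∀ γ' : Ordinal, γ = (γ' + 1) + Ordinal.omega0 ^ α 0 →
          Nonempty (StoneCech (Set.Iio γ) ≃ₜ
            ((Set.Iio (γ' + 1)) ⊕ StoneCech (Set.Iio (Ordinal.omega0 ^ α 0))))) := by
  constructor
  · intro _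
    rw [opow_zero]
    have h1 : ¬IsSuccLimit (1 : Ordinal.{0}) := by
      simpa using not_isSuccLimit_add_one (0 : Ordinal)
    have e : Iio γ ≃ₜ Iio (1 : Ordinal.{0}) ⊕ Iio γ :=
      (Homeomorph.setCongr (by rw [one_add_of_omega0_le hγ])).trans
        (iioAddHomeomorph h1 γ).symm
    exact ⟨Homeomorph.stoneCechOfCompact.trans <| e.trans <| (Homeomorph.sumComm _ _).trans <|
      .sumCongr (.refl _) ((Homeomorph.homeomorphOfUnique _ _).trans
        Homeomorph.stoneCechOfCompact.symm)⟩
  · intro _ k α n _ _ _ γ' hγ'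
    have e : Iio γ ≃ₜ Iio (γ' + 1) ⊕ Iio (ω ^ α 0) :=
      (Homeomorph.setCongr (congrArg Iio hγ')).trans
        (iioAddHomeomorph (not_isSuccLimit_add_one γ') _).symm
    have : CompactSpace (Iio (γ' + 1)) :=
      isCompact_iff_compactSpace.mp (by rw [Iio_add_one_eq_Iic, ← Icc_bot]; exact isCompact_Icc)
    exact ⟨e.stoneCechCongr.trans <| Homeomorph.stoneCechSum.trans <|
      .sumCongr Homeomorph.stoneCechOfCompact (.refl _)⟩
end

section
/- Let F = (W, ≤) be a finite rooted quasi-ordered S4.1-frame. Then F is a 1-roach if and only if F has a unique maximal point (i.e., F is an S4.1.2-frame). -/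
/-- `m` is a maximal point: `↑m = {m}`. -/
def IsMaxPt {W : Type*} (le : W → W → Prop) (m : W) : Prop :=
  ∀ x, le m x → x = m

/-- The depth of `w` is at most `n`: every strictly ascending chain (each step goes up and
not back down, i.e. moves to a strictly higher cluster) starting at `w` has length at most
`n`. -/
def DepthLE {W : Type*} (le : W → W → Prop) (w : W) (n : ℕ) : Prop :=
  ∀ l : List W, l.head? = some w → l.Chain' (fun a b => le a b ∧ ¬ le b a) → l.length ≤ n

/-- `s` is a splitting point witnessing the `n`-roach condition: `s` has depth at most `n`,
the up-set `↑s` is partially ordered (the restriction of `le` is antisymmetric on it), and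
for every `w` there is `t_w ∈ ↑s` with `↑w ∩ ↑s = ↑t_w`. -/
def IsSplittingPoint {W : Type*} (le : W → W → Prop) (n : ℕ) (s : W) : Prop :=
  DepthLE le s n ∧
  (∀ a b, le s a → le s b → le a b → le b a → a = b) ∧
  (∀ w, ∃ t, le s t ∧ ∀ x, (le w x ∧ le s x) ↔ le t x)

/-- An `n`-roach: a frame possessing a splitting point of depth at most `n`. -/
def IsNRoach {W : Type*} (le : W → W → Prop) (n : ℕ) : Prop :=
  ∃ s, IsSplittingPoint le n s


/-!
Depth at most one means that `s` lies in a maximal cluster; antisymmetry on `↑s` shrinks that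
cluster to the single point `s`, and the splitting condition applied to any `w` yields
`t_w ∈ ↑s = {s}` with `s ∈ ↑t_w ⊆ ↑w`, so every point sees `s`. Conversely, in an S4.1-frame
every point sees a maximal point, so a unique maximal point `m` lies above everything and
`s = m`, `t_w = m` witness the roach condition.
-/

section Frame

variable {W : Type*} {le : W → W → Prop}

theorem depthLE_one_iff {w : W} : DepthLE le w 1 ↔ ∀ x, le w x → le x w := by
  constructor
  · intro hdepth x hwx
    by_contra hxw
    have := hdepth [w, x] rfl (.cons_cons ⟨hwx, hxw⟩ (.singleton x))
    simp at this
  · rintro hcluster (_ | ⟨a, _ | ⟨b, rest⟩⟩) hhead hchain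
    · simp
    · simp
    · obtain rfl : a = w := by simpa using hhead
      exact absurd (hcluster b hchain.rel.1) hchain.rel.2

theorem IsMaxPt.depthLE_one (hrefl : ∀ w, le w w) {m : W} (hm : IsMaxPt le m) :
    DepthLE le m 1 :=
  depthLE_one_iff.2 fun x hmx => hm x hmx ▸ hrefl m

theorem IsMaxPt.eq_of_forall_le {m m' : W} (hm' : IsMaxPt le m') (hle : ∀ w, le w m) : m' = m :=
  (hm' m (hle m')).symm

theorem le_of_forall_isMaxPt_eq (hs41 : ∀ w, ∃ m, le w m ∧ IsMaxPt le m) {m : W}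
    (huniq : ∀ m', IsMaxPt le m' → m' = m) (w : W) : le w m := by
  obtain ⟨m', hwm', hm'⟩ := hs41 w
  exact huniq m' hm' ▸ hwm'

namespace IsSplittingPoint

theorem isMaxPt_of_one (hrefl : ∀ w, le w w) {s : W} (hs : IsSplittingPoint le 1 s) :
    IsMaxPt le s :=
  fun x hsx => hs.2.1 x s hsx (hrefl s) (depthLE_one_iff.1 hs.1 x hsx) hsx

theorem le_of_isMaxPt (hrefl : ∀ w, le w w) {n : ℕ} {s : W} (hs : IsSplittingPoint le n s)
    (hmax : IsMaxPt le s) (w : W) : le w s := by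
  obtain ⟨t, hst, ht⟩ := hs.2.2 w
  exact ((ht s).2 (hmax t hst ▸ hrefl s)).1

end IsSplittingPoint

theorem IsMaxPt.isSplittingPoint (hrefl : ∀ w, le w w) {m : W} (hm : IsMaxPt le m)
    (hle : ∀ w, le w m) : IsSplittingPoint le 1 m :=
  ⟨hm.depthLE_one hrefl, fun a b ha hb _ _ => (hm a ha).trans (hm b hb).symm,
    fun w => ⟨m, hrefl m, fun x => ⟨And.right, fun hmx => ⟨hm x hmx ▸ hle w, hmx⟩⟩⟩⟩

end Frame

theorem stmt_12_general {W : Type*} (le : W → W → Prop)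
    (hrefl : ∀ w, le w w)
    (hs41 : ∀ w, ∃ m, le w m ∧ IsMaxPt le m) :
    IsNRoach le 1 ↔ ∃! m, IsMaxPt le m := by
  constructor
  · rintro ⟨s, hs⟩
    have hmax := hs.isMaxPt_of_one hrefl
    exact ⟨s, hmax, fun m hm => hm.eq_of_forall_le (hs.le_of_isMaxPt hrefl hmax)⟩
  · rintro ⟨m, hm, huniq⟩
    exact ⟨m, hm.isSplittingPoint hrefl (le_of_forall_isMaxPt_eq hs41 huniq)⟩

/-- A finite rooted S4.1-frame is a 1-roach iff it has a unique maximal point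
(i.e. it is an S4.1.2-frame). -/
theorem stmt_12 {W : Type*} [Fintype W] (le : W → W → Prop)
    (hrefl : ∀ w, le w w)
    (htrans : ∀ a b c, le a b → le b c → le a c)
    (hroot : ∃ r, ∀ w, le r w)
    (hs41 : ∀ w, ∃ m, le w m ∧ IsMaxPt le m) :
    IsNRoach le 1 ↔ ∃! m, IsMaxPt le m :=
  stmt_12_general le hrefl hs41
end

section
/- A finite rooted S4.1-frame F = (W, ≤) is a 2-roach if and only if there exists s ∈ W such that ↑s = {s} ∪ max(F) and for every w ∈ W \ ↓s, the generated subframe ↑w has a unique maximal point (is an S4.1.2-frame). -/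
/-!
A splitting point `s` of depth at most 2 with `↑s` partially ordered has only `s` and maximal
points above it, and the splitting condition applied to a maximal `m` puts `m` above `s`; hence
`↑s = {s} ∪ max(F)`. For `w ∉ ↓s` the point `t_w` is then maximal and every maximal point above
`w` lies in `↑w ∩ ↑s = ↑t_w`, so it equals `t_w`. Conversely, if `↑s = {s} ∪ max(F)` then `↑s`
has depth 2 and is partially ordered, and one takes `t_w = s` for `w ≤ s` and `t_w` the unique
maximal point above `w` otherwise.
-/

section Roach

variable {W : Type*} {le : W → W → Prop}

theorem DepthLE.le_of_le_of_le_of_not_le_two {s t x : W} (hdep : DepthLE le s 2)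
    (hst : le s t) (hts : ¬ le t s) (htx : le t x) : le x t := by
  by_contra hxt
  have := hdep [s, t, x] rfl
    (by simp only [List.Chain', List.isChain_cons_cons, List.isChain_singleton, and_true]
        exact ⟨⟨hst, hts⟩, htx, hxt⟩)
  simp at this

theorem eq_or_isMaxPt_of_isSplittingPoint_two (hrefl : ∀ w, le w w)
    (htrans : ∀ a b c, le a b → le b c → le a c) {s t : W}
    (hs : IsSplittingPoint le 2 s) (hst : le s t) : t = s ∨ IsMaxPt le t := by
  obtain ⟨hdep, hanti, -⟩ := hs
  by_cases hts : le t s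
  · exact .inl (hanti t s hst (hrefl s) hts hst)
  · exact .inr fun x htx =>
      hanti x t (htrans s t x hst htx) hst (hdep.le_of_le_of_le_of_not_le_two hst hts htx) htx

theorem IsSplittingPoint.le_of_isMaxPt_s13 (hrefl : ∀ w, le w w) {n : ℕ} {s m : W}
    (hs : IsSplittingPoint le n s) (hm : IsMaxPt le m) : le s m := by
  obtain ⟨t, hst, ht⟩ := hs.2.2 m
  obtain rfl : t = m := hm t ((ht t).2 (hrefl t)).1
  exact hst

theorem le_iff_eq_or_isMaxPt_of_isSplittingPoint_two (hrefl : ∀ w, le w w)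
    (htrans : ∀ a b c, le a b → le b c → le a c) {s : W}
    (hs : IsSplittingPoint le 2 s) (x : W) : le s x ↔ x = s ∨ IsMaxPt le x := by
  refine ⟨eq_or_isMaxPt_of_isSplittingPoint_two hrefl htrans hs, ?_⟩
  rintro (rfl | hx)
  · exact hrefl x
  · exact hs.le_of_isMaxPt_s13 hrefl hx

theorem existsUnique_isMaxPt_of_isSplittingPoint_two (hrefl : ∀ w, le w w)
    (htrans : ∀ a b c, le a b → le b c → le a c) {s w : W}
    (hs : IsSplittingPoint le 2 s) (hws : ¬ le w s) : ∃! m, le w m ∧ IsMaxPt le m := by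
  obtain ⟨t, hst, ht⟩ := hs.2.2 w
  have hwt : le w t := ((ht t).2 (hrefl t)).1
  have htmax : IsMaxPt le t := by
    rcases eq_or_isMaxPt_of_isSplittingPoint_two hrefl htrans hs hst with rfl | h
    · exact absurd hwt hws
    · exact h
  refine ⟨t, ⟨hwt, htmax⟩, fun m ⟨hwm, hm⟩ => htmax m ((ht m).1 ⟨hwm, hs.le_of_isMaxPt_s13 hrefl hm⟩)⟩

variable {s : W} (hup : ∀ x, le s x ↔ x = s ∨ IsMaxPt le x)
include hup

theorem depthLE_two_of_le_iff (hrefl : ∀ w, le w w) : DepthLE le s 2 := by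
  rintro (_ | ⟨a, _ | ⟨b, _ | ⟨c, rest⟩⟩⟩) hhead hchain
  any_goals simp
  obtain rfl : a = s := by simpa using hhead
  simp only [List.Chain', List.isChain_cons_cons] at hchain
  obtain ⟨⟨hab, hba⟩, ⟨hbc, hcb⟩, -⟩ := hchain
  have hbmax : IsMaxPt le b := ((hup b).1 hab).resolve_left (by rintro rfl; exact hba (hrefl _))
  exact hcb (hbmax c hbc ▸ hrefl b)

theorem antisymm_of_le_iff {a b : W} (hsa : le s a) (hsb : le s b) (hab : le a b)
    (hba : le b a) : a = b := by
  rcases (hup a).1 hsa with rfl | ha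
  · rcases (hup b).1 hsb with rfl | hb
    · rfl
    · exact hb a hba
  · exact (ha b hab).symm

theorem exists_upperSet_inter_eq_of_le_iff (hrefl : ∀ w, le w w)
    (htrans : ∀ a b c, le a b → le b c → le a c)
    (huniq : ∀ w, ¬ le w s → ∃! m, le w m ∧ IsMaxPt le m) (w : W) :
    ∃ t, le s t ∧ ∀ x, (le w x ∧ le s x) ↔ le t x := by
  by_cases hws : le w s
  · exact ⟨s, hrefl s, fun x => ⟨And.right, fun hsx => ⟨htrans w s x hws hsx, hsx⟩⟩⟩
  obtain ⟨m, ⟨hwm, hm⟩, hu⟩ := huniq w hws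
  refine ⟨m, (hup m).2 (.inr hm), fun x => ⟨fun ⟨hwx, hsx⟩ => ?_, fun hmx => ?_⟩⟩
  · rcases (hup x).1 hsx with rfl | hx
    · exact absurd hwx hws
    · exact hu x ⟨hwx, hx⟩ ▸ hrefl m
  · obtain rfl := hm x hmx
    exact ⟨hwm, (hup x).2 (.inr hm)⟩

end Roach

theorem stmt_13_general {W : Type*} (le : W → W → Prop)
    (hrefl : ∀ w, le w w)
    (htrans : ∀ a b c, le a b → le b c → le a c) :
    IsNRoach le 2 ↔
      ∃ s : W, ({x | le s x} = {s} ∪ {m | IsMaxPt le m}) ∧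
        ∀ w, ¬ le w s → ∃! m, le w m ∧ IsMaxPt le m := by
  constructor
  · rintro ⟨s, hs⟩
    refine ⟨s, Set.ext fun x => ?_, fun w hws => ?_⟩
    · exact le_iff_eq_or_isMaxPt_of_isSplittingPoint_two hrefl htrans hs x
    · exact existsUnique_isMaxPt_of_isSplittingPoint_two hrefl htrans hs hws
  · rintro ⟨s, hset, huniq⟩
    have hup : ∀ x, le s x ↔ x = s ∨ IsMaxPt le x := fun x => Set.ext_iff.mp hset x
    exact ⟨s, depthLE_two_of_le_iff hup hrefl, fun _ _ => antisymm_of_le_iff hup,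
      exists_upperSet_inter_eq_of_le_iff hup hrefl htrans huniq⟩

/-- A finite rooted S4.1-frame is a 2-roach iff there is `s` with
`↑s = {s} ∪ max(F)` such that for every `w ∉ ↓s` the generated subframe `↑w`
has a unique maximal point. -/
theorem stmt_13 {W : Type*} [Fintype W] (le : W → W → Prop)
    (hrefl : ∀ w, le w w)
    (htrans : ∀ a b c, le a b → le b c → le a c)
    (hroot : ∃ r, ∀ w, le r w)
    (hs41 : ∀ w, ∃ m, le w m ∧ IsMaxPt le m) :
    IsNRoach le 2 ↔
      ∃ s : W, ({x | le s x} = {s} ∪ {m | IsMaxPt le m}) ∧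
        ∀ w, ¬ le w s → ∃! m, le w m ∧ IsMaxPt le m :=
  stmt_13_general le hrefl htrans
end

section
/- The class of 2-roaches is closed under generated subframes: if F = (W, ≤) is a 2-roach and w ∈ W, then the subframe on ↑w is a 2-roach. -/
/-
If `t` lies above the splitting point `s` of `F` and `↑w ∩ ↑s = ↑t`, then `t` is a splitting
point of the subframe `↑w`: its depth does not exceed that of `s`, `↑t ⊆ ↑s` is still partially
ordered, and for `v ∈ ↑w` the point `t_v` of `F` already satisfies `↑v ∩ ↑t = ↑t_v`.
-/

section UpSet

variable {W : Type*} {le : W → W → Prop}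

/-- A strictly ascending chain from `t` is turned into one from `s ≤ t` that is at least as
long: replace `t` by `s` if `t ≤ s`, and prepend `s` otherwise. -/
theorem DepthLE.of_le (htrans : ∀ a b c, le a b → le b c → le a c) {s t : W} {n : ℕ}
    (hs : DepthLE le s n) (hst : le s t) : DepthLE le t n := by
  rintro (_ | ⟨a, rest⟩) hhead hchain
  · simp at hhead
  obtain rfl : t = a := (Option.some.inj hhead).symm
  by_cases hts : le t s
  · cases rest with
    | nil => simpa using hs [s] rfl (List.isChain_singleton _)
    | cons b rest =>
      obtain ⟨htb, hchain⟩ := List.isChain_cons_cons.1 hchain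
      have hsb : le s b ∧ ¬ le b s :=
        ⟨htrans s t b hst htb.1, fun hbs => htb.2 (htrans b s t hbs hst)⟩
      simpa using hs (s :: b :: rest) rfl (List.isChain_cons_cons.2 ⟨hsb, hchain⟩)
  · have := hs (s :: t :: rest) rfl (List.isChain_cons_cons.2 ⟨⟨hst, hts⟩, hchain⟩)
    simp only [List.length_cons] at this ⊢
    omega

theorem DepthLE.subtype {p : W → Prop} {x : Subtype p} {n : ℕ} (hx : DepthLE le x.1 n) :
    DepthLE (fun a b : Subtype p => le a.1 b.1) x n := by
  intro l hhead hchain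
  simpa using hx (l.map Subtype.val) (by cases l <;> simp_all) (List.isChain_map _ |>.2 hchain)

theorem IsSplittingPoint.restrict_upSet (hrefl : ∀ w, le w w)
    (htrans : ∀ a b c, le a b → le b c → le a c) {n : ℕ} {s w t : W}
    (hs : IsSplittingPoint le n s) (ht : ∀ x, (le w x ∧ le s x) ↔ le t x) :
    IsSplittingPoint (fun a b : {x // le w x} => le a.1 b.1) n ⟨t, ((ht t).2 (hrefl t)).1⟩ := by
  obtain ⟨hdepth, hanti, hsplit⟩ := hs
  have hst : le s t := ((ht t).2 (hrefl t)).2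
  refine ⟨(hdepth.of_le htrans hst).subtype, ?_, ?_⟩
  · rintro ⟨a, _⟩ ⟨b, _⟩ hta htb hab hba
    exact Subtype.ext (hanti a b (htrans s t a hst hta) (htrans s t b hst htb) hab hba)
  · rintro ⟨v, hwv⟩
    obtain ⟨u, hsu, hu⟩ := hsplit v
    have hvu : le v u := ((hu u).2 (hrefl u)).1
    have hwu : le w u := htrans w v u hwv hvu
    refine ⟨⟨u, hwu⟩, (ht u).1 ⟨hwu, hsu⟩, ?_⟩
    rintro ⟨x, hwx⟩
    simp only [← ht x, ← hu x, hwx, true_and]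

end UpSet

theorem stmt_15_general {W : Type*} (le : W → W → Prop)
    (hrefl : ∀ w, le w w)
    (htrans : ∀ a b c, le a b → le b c → le a c)
    (h2 : IsNRoach le 2) (w : W) :
    IsNRoach (fun a b : {x // le w x} => le a.1 b.1) 2 := by
  obtain ⟨s, hs⟩ := h2
  obtain ⟨t, -, ht⟩ := hs.2.2 w
  exact ⟨_, hs.restrict_upSet hrefl htrans ht⟩

/-- The class of 2-roaches is closed under generated subframes: for any `w`, the subframe
on `↑w` (with the restricted order) is again a 2-roach. -/
theorem stmt_15 {W : Type*} [Fintype W] (le : W → W → Prop)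
    (hrefl : ∀ w, le w w)
    (htrans : ∀ a b c, le a b → le b c → le a c)
    (hroot : ∃ r, ∀ w, le r w)
    (hs41 : ∀ w, ∃ m, le w m ∧ IsMaxPt le m)
    (h2 : IsNRoach le 2) (w : W) :
    IsNRoach (fun a b : {x // le w x} => le a.1 b.1) 2 :=
  stmt_15_general le hrefl htrans h2 w
end

section
/- The class of 2-roaches is closed under p-morphic images: if F = (W, ≤) is a 2-roach and f : W → V is a surjective p-morphism onto a finite rooted S4.1-frame G = (V, ⪯), then G is a 2-roach. -/
/-- Chains starting at `f w` lift along a p-morphism to chains of the same length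
starting at `w`. -/
lemma lift_chain_aux {W V : Type*} (le : W → W → Prop) (leV : V → V → Prop)
    (f : W → V) (hforth : ∀ w u, le w u → leV (f w) (f u))
    (hback : ∀ w v, leV (f w) v → ∃ u, le w u ∧ f u = v) :
    ∀ (l : List V) (w : W), l.head? = some (f w) →
      l.Chain' (fun a b => leV a b ∧ ¬ leV b a) →
      ∃ l' : List W, l'.head? = some w ∧ l'.Chain' (fun a b => le a b ∧ ¬ le b a) ∧
        l'.length = l.length := by
  intro l
  induction l with
  | nil => intro w h; simp at h
  | cons v rest ih =>
    intro w hh hc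
    have hv : v = f w := by simpa using hh
    cases rest with
    | nil => exact ⟨[w], rfl, List.isChain_singleton w, rfl⟩
    | cons v' rest' =>
      obtain ⟨⟨h1, h2⟩, hc'⟩ := List.isChain_cons_cons.mp hc
      obtain ⟨u, hwu, hu⟩ := hback w v' (hv ▸ h1)
      obtain ⟨l'', hh'', hc'', hl''⟩ := ih u (by simp [hu]) hc'
      cases l'' with
      | nil => simp at hh''
      | cons u0 tail =>
        have hu0 : u0 = u := by simpa using hh''
        subst hu0
        refine ⟨w :: u0 :: tail, rfl, List.isChain_cons_cons.mpr ⟨⟨hwu, ?_⟩, hc''⟩,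
          by simpa using hl''⟩
        intro h
        have h3 := hforth u0 w h
        rw [hu, ← hv] at h3
        exact h2 h3

/-- In a frame with a splitting point of depth at most 2, every point above the splitting
point is either the splitting point itself or a maximal point. -/
lemma upmax_aux {W : Type*} (le : W → W → Prop)
    (hrefl : ∀ w, le w w)
    (htrans : ∀ a b c, le a b → le b c → le a c)
    (s : W) (hdep : DepthLE le s 2)
    (hanti : ∀ a b, le s a → le s b → le a b → le b a → a = b) :
    ∀ u, le s u → u = s ∨ IsMaxPt le u := by
  intro u hsu
  by_cases h : le u s
  · exact Or.inl (hanti u s hsu (hrefl s) h hsu)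
  · right
    intro x hux
    have hsx : le s x := htrans s u x hsu hux
    by_cases hxu : le x u
    · exact hanti x u hsx hsu hxu hux
    · exfalso
      have hch : List.Chain' (fun a b => le a b ∧ ¬ le b a) [s, u, x] :=
        List.isChain_cons_cons.mpr ⟨⟨hsu, h⟩,
          List.isChain_cons_cons.mpr ⟨⟨hux, hxu⟩, List.isChain_singleton x⟩⟩
      have := hdep [s, u, x] rfl hch
      simp at this

/-- The class of 2-roaches is closed under p-morphic images. -/
theorem stmt_16 {W V : Type*} [Fintype W] [Fintype V]
    (le : W → W → Prop)
    (hrefl : ∀ w, le w w)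
    (htrans : ∀ a b c, le a b → le b c → le a c)
    (hroot : ∃ r, ∀ w, le r w)
    (hs41 : ∀ w, ∃ m, le w m ∧ IsMaxPt le m)
    (leV : V → V → Prop)
    (hreflV : ∀ v, leV v v)
    (htransV : ∀ a b c, leV a b → leV b c → leV a c)
    (hrootV : ∃ r, ∀ v, leV r v)
    (hs41V : ∀ v, ∃ m, leV v m ∧ IsMaxPt leV m)
    (f : W → V) (hsurj : Function.Surjective f)
    (hforth : ∀ w u, le w u → leV (f w) (f u))
    (hback : ∀ w v, leV (f w) v → ∃ u, le w u ∧ f u = v)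
    (h2 : IsNRoach le 2) :
    IsNRoach leV 2 := by
  obtain ⟨s, hdep, hanti, hsplit⟩ := h2
  -- every maximal point of W lies above s
  have hmaxs : ∀ m, IsMaxPt le m → le s m := by
    intro m hm
    obtain ⟨t, hst, ht⟩ := hsplit m
    have h1 := (ht t).mpr (hrefl t)
    have h2' := hm t h1.1
    rw [h2'] at hst
    exact hst
  -- depth of f s in V is at most 2
  have hdepV : DepthLE leV (f s) 2 := by
    intro l hh hc
    obtain ⟨l', hh', hc', hl'⟩ := lift_chain_aux le leV f hforth hback l s hh hc
    rw [← hl']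
    exact hdep l' hh' hc'
  -- antisymmetry above f s
  have hantiV : ∀ a b, leV (f s) a → leV (f s) b → leV a b → leV b a → a = b := by
    intro a b hsa hsb hab hba
    obtain ⟨u1, hsu1, hu1⟩ := hback s a hsa
    rcases upmax_aux le hrefl htrans s hdep hanti u1 hsu1 with h | h
    · -- u1 = s, so a = f s
      obtain ⟨u2, hsu2, hu2⟩ := hback s b hsb
      rcases upmax_aux le hrefl htrans s hdep hanti u2 hsu2 with h2' | h2'
      · rw [← hu1, ← hu2, h, h2']
      · obtain ⟨u3, hu23, hu3⟩ := hback u2 a (by rw [hu2]; exact hba)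
        have h3 := h2' u3 hu23
        rw [← hu3, h3, hu2]
    · obtain ⟨u2, hu12, hu2⟩ := hback u1 b (by rw [hu1]; exact hab)
      have h3 := h u2 hu12
      rw [← hu1, ← hu2, h3]
  have hVmax := upmax_aux leV hreflV htransV (f s) hdepV hantiV
  refine ⟨f s, hdepV, hantiV, ?_⟩
  intro v
  by_cases hvs : leV v (f s)
  · exact ⟨f s, hreflV _, fun x =>
      ⟨fun h => h.2, fun h => ⟨htransV _ _ _ hvs h, h⟩⟩⟩
  · obtain ⟨w, rfl⟩ := hsurj v
    obtain ⟨t, hst, ht⟩ := hsplit w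
    refine ⟨f t, hforth _ _ hst, fun x => ⟨?_, ?_⟩⟩
    · rintro ⟨hvx, hsx⟩
      obtain ⟨u, hwu, hu⟩ := hback w x hvx
      obtain ⟨m, hum, hm⟩ := hs41 u
      have hsm : le s m := hmaxs m hm
      have hwm : le w m := htrans _ _ _ hwu hum
      have htm : le t m := (ht m).mp ⟨hwm, hsm⟩
      have h1 : leV x (f m) := by
        have := hforth u m hum
        rw [hu] at this
        exact this
      have hxmax : IsMaxPt leV x := by
        rcases hVmax x hsx with h | h
        · rw [h] at hvx; exact absurd hvx hvs
        · exact h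
      have h2' : f m = x := hxmax (f m) h1
      rw [← h2']
      exact hforth t m htm
    · intro htx
      exact ⟨htransV _ _ _ (hforth _ _ ((ht t).mpr (hrefl t)).1) htx,
        htransV _ _ _ (hforth _ _ hst) htx⟩
end

section
/- Let F = (W, ≤) be a finite rooted S4.1-frame with root q. If the depth of q is at least 3, F has at least two maximal points, and for every w ∈ W outside the cluster of q the generated subframe ↑w has a unique maximal point, then the frame T₂ (with underlying set {r, v, w₁, w₂} and order generated by r ≤ v, r ≤ w₁, w₁ ≤ w₂, plus reflexivity) is a p-morphic image of F. -/
/-- The order of the frame `T₂` on `{r, v, w₁, w₂} = {0, 1, 2, 3}`: generated by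
`r ≤ v`, `r ≤ w₁`, `w₁ ≤ w₂` together with reflexivity (and transitivity, so
`r ≤ w₂`). -/
def leT2 : Fin 4 → Fin 4 → Prop := fun a b => a = b ∨ a = 0 ∨ (a = 2 ∧ b = 3)

/-!
Pick a strict chain `q < y < z` and let `m` be the maximal point above `y`. Since points outside
the root cluster see a unique maximal point, the points of `↓m` outside the root cluster form an
up-set. Send the root cluster to `r`, the points of this up-set to `w₂` or `w₁` according to
whether they see `z` or not, and everything else to `v`; a second maximal point `m' ≠ m` is
sent to `v`, which makes the map onto.
-/

section Preorder

variable {W : Type*} [Preorder W]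

theorem exists_lt_lt_of_not_depthLE_two {q : W} (h : ¬ DepthLE (· ≤ ·) q 2) :
    ∃ y z : W, q < y ∧ y < z := by
  simp only [DepthLE, not_forall] at h
  obtain ⟨l, hhead, hchain, hlen⟩ := h
  rcases l with _ | ⟨x, _ | ⟨y, _ | ⟨z, _⟩⟩⟩
  iterate 3 simp at hlen
  obtain rfl : x = q := by simpa using hhead
  obtain ⟨hqy, hchain⟩ := List.isChain_cons_cons.1 hchain
  obtain ⟨hyz, -⟩ := List.isChain_cons_cons.1 hchain
  exact ⟨y, z, lt_iff_le_not_ge.2 hqy, lt_iff_le_not_ge.2 hyz⟩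

theorem IsMaxPt.not_le_of_lt {p q y : W} (hp : IsMaxPt (· ≤ ·) p) (hqy : q < y) : ¬ p ≤ q :=
  fun hpq => hqy.not_ge (hp y (hpq.trans hqy.le) ▸ hpq)

theorem le_of_existsUnique_isMaxPt {w u m : W} (huniq : ∃! m, w ≤ m ∧ IsMaxPt (· ≤ ·) m)
    (hwm : w ≤ m) (hm : IsMaxPt (· ≤ ·) m) (hwu : w ≤ u) (hu : ∃ m, u ≤ m ∧ IsMaxPt (· ≤ ·) m) :
    u ≤ m := by
  obtain ⟨mu, hmu, hmumax⟩ := hu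
  rwa [huniq.unique ⟨hwm, hm⟩ ⟨hwu.trans hmu, hmumax⟩]

open scoped Classical in
noncomputable def t2Map (q m z w : W) : Fin 4 :=
  if w ≤ q then 0 else if w ≤ m then if z ≤ w then 3 else 2 else 1

variable {q m z w : W}

theorem le_of_t2Map_eq_zero (h : t2Map q m z w = 0) : w ≤ q := by
  unfold t2Map at h
  split_ifs at h <;> first | assumption | simp at h

theorem le_of_t2Map_eq_two (h : t2Map q m z w = 2) : w ≤ m := by
  unfold t2Map at h
  split_ifs at h <;> first | assumption | simp at h

theorem t2Map_surjective {y m' : W} (hyq : ¬ y ≤ q) (hym : y ≤ m) (hzy : ¬ z ≤ y) (hzm : z ≤ m)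
    (hmq : ¬ m ≤ q) (hm'q : ¬ m' ≤ q) (hm'm : ¬ m' ≤ m) :
    Function.Surjective (t2Map q m z) := by
  intro v
  fin_cases v
  · exact ⟨q, by simp [t2Map]⟩
  · exact ⟨m', by simp [t2Map, hm'q, hm'm]⟩
  · exact ⟨y, by simp [t2Map, hyq, hym, hzy]⟩
  · exact ⟨m, by simp [t2Map, hmq, hzm]⟩

theorem leT2_t2Map_of_le (hcone : ∀ w u : W, ¬ w ≤ q → w ≤ m → w ≤ u → u ≤ m) {u : W}
    (hwu : w ≤ u) : leT2 (t2Map q m z w) (t2Map q m z u) := by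
  by_cases hwq : w ≤ q
  · simp [t2Map, leT2, hwq]
  have huq : ¬ u ≤ q := fun h => hwq (hwu.trans h)
  by_cases hwm : w ≤ m
  · have hum := hcone w u hwq hwm hwu
    by_cases hzw : z ≤ w
    · simp [t2Map, leT2, hwq, huq, hwm, hum, hzw, hzw.trans hwu]
    · by_cases hzu : z ≤ u <;> simp [t2Map, leT2, hwq, huq, hwm, hum, hzw, hzu]
  · have hum : ¬ u ≤ m := fun h => hwm (hwu.trans h)
    simp [t2Map, leT2, hwq, huq, hwm, hum]

theorem exists_le_t2Map_eq_of_leT2 (hroot : ∀ w : W, q ≤ w)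
    (hsurj : Function.Surjective (t2Map q m z)) (hm : t2Map q m z m = 3) {v : Fin 4}
    (hv : leT2 (t2Map q m z w) v) : ∃ u, w ≤ u ∧ t2Map q m z u = v := by
  rcases hv with rfl | h0 | ⟨h2, rfl⟩
  · exact ⟨w, le_rfl, rfl⟩
  · obtain ⟨u, rfl⟩ := hsurj v
    exact ⟨u, (le_of_t2Map_eq_zero h0).trans (hroot u), rfl⟩
  · exact ⟨m, le_of_t2Map_eq_two h2, hm⟩

end Preorder

theorem stmt_17_general {W : Type*} (le : W → W → Prop)
    (hrefl : ∀ w, le w w)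
    (htrans : ∀ a b c, le a b → le b c → le a c)
    (q : W) (hroot : ∀ w, le q w)
    (hs41 : ∀ w, ∃ m, le w m ∧ IsMaxPt le m)
    (hdepth : ¬ DepthLE le q 2)
    (htwomax : ∃ m₁ m₂, m₁ ≠ m₂ ∧ IsMaxPt le m₁ ∧ IsMaxPt le m₂)
    (huniq : ∀ w, ¬ (le q w ∧ le w q) → ∃! m, le w m ∧ IsMaxPt le m) :
    ∃ f : W → Fin 4, Function.Surjective f ∧
      (∀ w u, le w u → leT2 (f w) (f u)) ∧
      (∀ w v, leT2 (f w) v → ∃ u, le w u ∧ f u = v) := by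
  let _ : Preorder W := { le := le, le_refl := hrefl, le_trans := htrans }
  obtain ⟨y, z, hqy, hyz⟩ := exists_lt_lt_of_not_depthLE_two hdepth
  obtain ⟨m, hym, hm⟩ := hs41 y
  obtain ⟨m₁, m₂, hne, hm₁, hm₂⟩ := htwomax
  obtain ⟨m', hm', hm'm⟩ := (show {p | IsMaxPt le p}.Nontrivial from
    ⟨m₁, hm₁, m₂, hm₂, hne⟩).exists_ne m
  have hcone : ∀ w u : W, ¬ w ≤ q → w ≤ m → w ≤ u → u ≤ m := fun w u hwq hwm hwu =>
    le_of_existsUnique_isMaxPt (huniq w fun h => hwq h.2) hwm hm hwu (hs41 u)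
  have hzm : z ≤ m := hcone y z hqy.not_ge hym hyz.le
  have hmq : ¬ m ≤ q := hm.not_le_of_lt hqy
  have hsurj : Function.Surjective (t2Map q m z) := t2Map_surjective hqy.not_ge hym hyz.not_ge hzm hmq
    (hm'.not_le_of_lt hqy) fun h => hm'm (hm' m h).symm
  exact ⟨t2Map q m z, hsurj, fun w u => leT2_t2Map_of_le hcone,
    fun w v => exists_le_t2Map_eq_of_leT2 hroot hsurj (by simp [t2Map, hmq, hzm])⟩

/-- If a finite rooted S4.1-frame has root `q` of depth at least 3, at least two maximal
points, and every point outside the cluster of `q` sees a unique maximal point, then the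
frame `T₂` is a p-morphic image of the frame. -/
theorem stmt_17 {W : Type*} [Fintype W] (le : W → W → Prop)
    (hrefl : ∀ w, le w w)
    (htrans : ∀ a b c, le a b → le b c → le a c)
    (q : W) (hroot : ∀ w, le q w)
    (hs41 : ∀ w, ∃ m, le w m ∧ IsMaxPt le m)
    (hdepth : ¬ DepthLE le q 2)
    (htwomax : ∃ m₁ m₂, m₁ ≠ m₂ ∧ IsMaxPt le m₁ ∧ IsMaxPt le m₂)
    (huniq : ∀ w, ¬ (le q w ∧ le w q) → ∃! m, le w m ∧ IsMaxPt le m) :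
    ∃ f : W → Fin 4, Function.Surjective f ∧
      (∀ w u, le w u → leT2 (f w) (f u)) ∧
      (∀ w v, leT2 (f w) v → ∃ u, le w u ∧ f u = v) :=
  stmt_17_general le hrefl htrans q hroot hs41 hdepth htwomax huniq
end

section
/- Let X be a topological space, F = (W, ≤) a finite quasi-ordered S4-frame with skeleton F* = (V, ⪯) (the poset of clusters) and natural projection π : W → V sending w to its cluster. Suppose f : X → V is a surjective interior map (where V carries the Alexandroff topology of ⪯-up-sets), and for every cluster C ∈ V the fiber f⁻¹(C) admits a partition into |C| many subsets each dense in f⁻¹(C). Then there exists a surjective interior map g : X → W (with W carrying the Alexandroff topology of ≤-up-sets) such that f = π ∘ g. -/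
open Topology

/-- Let `F = (W, le)` be a finite quasi-ordered S4-frame with skeleton `F* = (V, leV)`
(the poset of clusters, a partial order) and natural projection `π : W → V` sending each
point to its cluster (so `leV (π w) (π v) ↔ le w v`). If `f : X → V` is a surjective
interior map and for every cluster `c ∈ V` the fiber `f⁻¹(c)` admits a partition into
`|π⁻¹(c)|` many subsets each dense in `f⁻¹(c)`, then there is a surjective interior map
`g : X → W` with `f = π ∘ g`. -/
theorem stmt_19 {X W V : Type*} [TopologicalSpace X] [Fintype W]
    (le : W → W → Prop)
    (hrefl : ∀ w, le w w)
    (htrans : ∀ a b c, le a b → le b c → le a c)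
    (leV : V → V → Prop)
    (hreflV : ∀ v, leV v v)
    (htransV : ∀ a b c, leV a b → leV b c → leV a c)
    (hantisymmV : ∀ a b, leV a b → leV b a → a = b)
    (π : W → V) (hπsurj : Function.Surjective π)
    (hπ : ∀ w v, leV (π w) (π v) ↔ le w v)
    (f : X → V) (hfsurj : Function.Surjective f)
    (hfcont : Continuous[inferInstance, upsetTopology leV] f)
    (hfopen : @IsOpenMap X V inferInstance (upsetTopology leV) f)
    (hres : ∀ c : V, ∃ P : (π ⁻¹' {c}) → Set X,
      (Pairwise fun i j => Disjoint (P i) (P j)) ∧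
      (⋃ i, P i) = f ⁻¹' {c} ∧
      ∀ i, f ⁻¹' {c} ⊆ closure (P i)) :
    ∃ g : X → W, Function.Surjective g ∧
      Continuous[inferInstance, upsetTopology le] g ∧
      @IsOpenMap X W inferInstance (upsetTopology le) g ∧
      f = π ∘ g := by

  classical
  choose P hdisj hcover hdense using hres
  have hmem : ∀ x : X, ∃ i : π ⁻¹' {f x}, x ∈ P (f x) i := by
    intro x
    have hx : x ∈ f ⁻¹' {f x} := rfl
    rw [← hcover (f x)] at hx
    exact Set.mem_iUnion.mp hx
  choose gi hgi using hmem
  set g : X → W := fun x => (gi x : W) with hg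
  have hπg : ∀ x, π (g x) = f x := fun x => (gi x).2
  have huniq : ∀ (x : X) (i : π ⁻¹' {f x}), x ∈ P (f x) i → gi x = i := by
    intro x i hi
    by_contra hne
    exact Set.disjoint_left.mp (hdisj (f x) hne) (hgi x) hi
  have hfiber : ∀ (c : V) (i : π ⁻¹' {c}) (x : X), x ∈ P c i → f x = c := by
    intro c i x hx
    have : x ∈ f ⁻¹' {c} := (hcover c) ▸ Set.mem_iUnion.mpr ⟨i, hx⟩
    exact this
  have hval' : ∀ (c : V) (w : W) (hw : π w = c) (x : X), x ∈ P c ⟨w, hw⟩ → g x = w := by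
    intro c w hw x hx
    have hfx : f x = c := hfiber _ _ _ hx
    subst hfx
    have := huniq x ⟨w, hw⟩ hx
    simp [hg, this]
  have hsurj : Function.Surjective g := by
    intro w
    obtain ⟨x0, hx0⟩ := hfsurj (π w)
    have hx0' : x0 ∈ closure (P (π w) ⟨w, rfl⟩) :=
      hdense (π w) ⟨w, rfl⟩ (by simp [hx0])
    have hne : (P (π w) ⟨w, rfl⟩).Nonempty := by
      rcases (P (π w) ⟨w, rfl⟩).eq_empty_or_nonempty with h | h
      · rw [h, closure_empty] at hx0'
        exact absurd hx0' (Set.notMem_empty x0)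
      · exact h
    obtain ⟨x, hx⟩ := hne
    exact ⟨x, hval' (π w) w rfl x hx⟩
  have hcont : Continuous[inferInstance, upsetTopology le] g := by
    rw [continuous_def]
    intro U hU
    have hEq : g ⁻¹' U = f ⁻¹' (π '' U) := by
      ext x
      simp only [Set.mem_preimage, Set.mem_image]
      constructor
      · intro hx
        exact ⟨g x, hx, hπg x⟩
      · rintro ⟨w, hw, hwx⟩
        have hle : le w (g x) := (hπ w (g x)).mp (by rw [hπg x, ← hwx]; exact hreflV _)
        exact hU hw hle
    rw [hEq]
    have hopenV : IsOpen[upsetTopology leV] (π '' U) := fun a ha b hab => by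
      obtain ⟨w, hw, rfl⟩ := ha
      obtain ⟨v, rfl⟩ := hπsurj b
      exact ⟨v, hU hw ((hπ w v).mp hab), rfl⟩
    exact @Continuous.isOpen_preimage X V _ (upsetTopology leV) f hfcont _ hopenV
  have hopen : @IsOpenMap X W _ (upsetTopology le) g := by
    intro A hA
    show ∀ ⦃w⦄, w ∈ g '' A → ∀ ⦃v⦄, le w v → v ∈ g '' A
    intro w hw v hlev
    obtain ⟨x, hxA, rfl⟩ := hw
    have hfA : IsOpen[upsetTopology leV] (f '' A) := hfopen A hA
    have h1 : f x ∈ f '' A := ⟨x, hxA, rfl⟩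
    have h2 : π v ∈ f '' A := by
      apply hfA h1
      rw [← hπg x]
      exact (hπ _ _).mpr hlev
    obtain ⟨y0, hy0A, hy0⟩ := h2
    have hy0c : y0 ∈ closure (P (π v) ⟨v, rfl⟩) :=
      hdense (π v) ⟨v, rfl⟩ (by simp [hy0])
    obtain ⟨y, hy⟩ := mem_closure_iff.mp hy0c A hA hy0A
    exact ⟨y, hy.1, hval' (π v) v rfl y hy.2⟩
  refine ⟨g, hsurj, hcont, hopen, ?_⟩
  funext x
  exact (hπg x).symm
end
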